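/- Let m ∈ ℕ, α > 0, v a weight, u₁, u₂ ∈ H(D), φ₁, φ₂ holomorphic self-maps of D. For every z ∈ D, with g_{φ₁(z)} the test function with g_a^{(m)}(w) = (1-|a|²)^α (a-w)/((1-āw)^{2α+m}), one has ‖(D^m_{φ₁,u₁} − D^m_{φ₂,u₂}) g_{φ₁(z)}‖_v ≥ [(1-|φ₁(z)|²)^α (1-|φ₂(z)|²)^{α+m-1} / |1-conj(φ₁(z))φ₂(z)|^{2α+m-1}] · |T₂(z)| · ρ(z), where T₂(z) = v(z)u₂(z)/(1-|φ₂(z)|²)^{α+m-1} and ρ(z) = |(φ₁(z)-φ₂(z))/(1-conj(φ₂(z))φ₁(z))| is the pseudo-hyperbolic distance of φ₁(z) and φ₂(z). -/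

import Mathlib

noncomputable section
open Complex
open scoped ENNReal

/-- The open unit disk in ℂ. -/
def UD : Set ℂ := Metric.ball 0 1

/-- The weighted-type (possibly infinite) sup norm ‖g‖_v = sup_{z∈D} v(z)|g(z)|, in ℝ≥0∞. -/
def vNormE (v : ℂ → ℝ) (g : ℂ → ℂ) : ℝ≥0∞ :=
  ⨆ z ∈ UD, ENNReal.ofReal (v z * ‖g z‖)

/-! Since `g_a^{(m)}(a) = 0` for `a = φ₁(z)`, evaluating `(D^m_{φ₁,u₁} − D^m_{φ₂,u₂}) g_a`
at the single point `z` leaves only `u₂(z) g_a^{(m)}(φ₂(z))`, and its weighted modulus equals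
the claimed lower bound once `|1 - conj(φ₂ z) φ₁ z| = |1 - conj(φ₁ z) φ₂ z|` is used. -/

lemma norm_lt_one_of_mem_UD {a : ℂ} (ha : a ∈ UD) : ‖a‖ < 1 :=
  mem_ball_zero_iff.mp ha

lemma ofReal_le_vNormE (v : ℂ → ℝ) (f : ℂ → ℂ) {z : ℂ} (hz : z ∈ UD) :
    ENNReal.ofReal (v z * ‖f z‖) ≤ vNormE v f :=
  le_iSup₂ (f := fun w (_ : w ∈ UD) => ENNReal.ofReal (v w * ‖f w‖)) z hz

lemma norm_one_sub_conj_mul_pos {a b : ℂ} (ha : ‖a‖ < 1) (hb : ‖b‖ < 1) :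
    0 < ‖1 - starRingEnd ℂ a * b‖ := by
  have hlt : ‖starRingEnd ℂ a * b‖ < 1 := by
    rw [norm_mul, Complex.norm_conj]
    nlinarith [norm_nonneg a, norm_nonneg b]
  refine norm_pos_iff.mpr (sub_ne_zero.mpr fun h => ?_)
  rw [← h, norm_one] at hlt
  exact lt_irrefl 1 hlt

lemma norm_one_sub_conj_mul_comm (a b : ℂ) :
    ‖1 - starRingEnd ℂ b * a‖ = ‖1 - starRingEnd ℂ a * b‖ := by
  rw [← Complex.norm_conj (1 - starRingEnd ℂ b * a), map_sub, map_one, map_mul,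
    Complex.conj_conj, mul_comm]

lemma norm_testFunction {a : ℂ} (ha : ‖a‖ ≤ 1) (α s : ℝ) (w : ℂ) :
    ‖(((1 - ‖a‖ ^ 2) ^ α : ℝ) : ℂ) * (a - w) / (1 - starRingEnd ℂ a * w) ^ (s : ℂ)‖ =
      (1 - ‖a‖ ^ 2) ^ α * ‖a - w‖ / ‖1 - starRingEnd ℂ a * w‖ ^ s := by
  have hA : 0 ≤ 1 - ‖a‖ ^ 2 := by nlinarith [norm_nonneg a]
  rw [norm_div, norm_mul, Complex.norm_real, Real.norm_eq_abs, Complex.norm_cpow_real,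
    abs_of_nonneg (Real.rpow_nonneg hA α)]

lemma rpow_div_rpow_sub_one_mul_div_eq {A B C D V : ℝ} (hB : 0 < B) (hC : 0 < C) (α β s : ℝ) :
    A ^ α * B ^ β / C ^ (s - 1) * (V / B ^ β) * (D / C) = V * (A ^ α * D / C ^ s) := by
  have hCs : C ^ s = C ^ (s - 1) * C := by
    rw [← Real.rpow_add_one hC.ne', sub_add_cancel]
  have hBβ : B ^ β ≠ 0 := (Real.rpow_pos_of_pos hB β).ne'
  have hCs1 : C ^ (s - 1) ≠ 0 := (Real.rpow_pos_of_pos hC _).ne'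
  rw [hCs]
  field_simp

theorem stmt13_general (m : ℕ) (α : ℝ) (v : ℂ → ℝ)
    (u₁ u₂ φ₁ φ₂ : ℂ → ℂ)
    (hφ₁D : ∀ w ∈ UD, φ₁ w ∈ UD) (hφ₂D : ∀ w ∈ UD, φ₂ w ∈ UD)
    (z : ℂ) (hz : z ∈ UD) (g : ℂ → ℂ)
    (hg : ∀ w ∈ UD, iteratedDeriv m g w =
      (((1 - ‖φ₁ z‖ ^ 2) ^ α : ℝ) : ℂ) * (φ₁ z - w) /
        (1 - (starRingEnd ℂ) (φ₁ z) * w) ^ (((2 * α + m : ℝ)) : ℂ)) :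
    ENNReal.ofReal
        ((1 - ‖φ₁ z‖ ^ 2) ^ α * (1 - ‖φ₂ z‖ ^ 2) ^ (α + m - 1) /
            ‖1 - (starRingEnd ℂ) (φ₁ z) * φ₂ z‖ ^ (2 * α + m - 1) *
          (v z * ‖u₂ z‖ / (1 - ‖φ₂ z‖ ^ 2) ^ (α + m - 1)) *
          ‖(φ₁ z - φ₂ z) / (1 - (starRingEnd ℂ) (φ₂ z) * φ₁ z)‖) ≤
      vNormE v (fun w =>
        u₁ w * iteratedDeriv m g (φ₁ w) - u₂ w * iteratedDeriv m g (φ₂ w)) := by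
  have ha := norm_lt_one_of_mem_UD (hφ₁D z hz)
  have hb := norm_lt_one_of_mem_UD (hφ₂D z hz)
  have hB : 0 < 1 - ‖φ₂ z‖ ^ 2 := by nlinarith [norm_nonneg (φ₂ z)]
  have hga : iteratedDeriv m g (φ₁ z) = 0 := by simp [hg _ (hφ₁D z hz)]
  have hgb := hg _ (hφ₂D z hz)
  refine le_of_eq_of_le ?_ (ofReal_le_vNormE v _ hz)
  rw [hga, hgb, mul_zero, zero_sub, norm_neg, norm_mul, norm_testFunction ha.le, norm_div,
    norm_one_sub_conj_mul_comm (φ₁ z), rpow_div_rpow_sub_one_mul_div_eq hB (norm_one_sub_conj_mul_pos ha hb), mul_assoc]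

/-- lower bound for ‖(D^m_{φ₁,u₁} − D^m_{φ₂,u₂}) g_{φ₁(z)}‖_v, where g_a is any
test function with g_a^{(m)}(w) = (1-|a|²)^α (a-w)/(1-āw)^{2α+m}. -/
theorem stmt13 (m : ℕ) (α : ℝ) (hα : 0 < α) (v : ℂ → ℝ) (hv : ∀ z ∈ UD, 0 < v z)
    (u₁ u₂ φ₁ φ₂ : ℂ → ℂ)
    (hφ₁D : ∀ w ∈ UD, φ₁ w ∈ UD) (hφ₂D : ∀ w ∈ UD, φ₂ w ∈ UD)
    (z : ℂ) (hz : z ∈ UD) (g : ℂ → ℂ)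
    (hg : ∀ w ∈ UD, iteratedDeriv m g w =
      (((1 - ‖φ₁ z‖ ^ 2) ^ α : ℝ) : ℂ) * (φ₁ z - w) /
        (1 - (starRingEnd ℂ) (φ₁ z) * w) ^ (((2 * α + m : ℝ)) : ℂ)) :
    ENNReal.ofReal
        ((1 - ‖φ₁ z‖ ^ 2) ^ α * (1 - ‖φ₂ z‖ ^ 2) ^ (α + m - 1) /
            ‖1 - (starRingEnd ℂ) (φ₁ z) * φ₂ z‖ ^ (2 * α + m - 1) *
          (v z * ‖u₂ z‖ / (1 - ‖φ₂ z‖ ^ 2) ^ (α + m - 1)) *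
          ‖(φ₁ z - φ₂ z) / (1 - (starRingEnd ℂ) (φ₂ z) * φ₁ z)‖) ≤
      vNormE v (fun w =>
        u₁ w * iteratedDeriv m g (φ₁ w) - u₂ w * iteratedDeriv m g (φ₂ w)) :=
  stmt13_general m α v u₁ u₂ φ₁ φ₂ hφ₁D hφ₂D z hz g hg
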